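/- Let a = (a₁,…,aₙ) and b = (b₁,…,bₙ) be integer vectors with a_j > b_j ≥ 0 for all j, and let φ_{a,b}(w) = (w₁^{a₁} conj(w₁)^{b₁}, …, wₙ^{aₙ} conj(wₙ)^{bₙ}). Let f : ℂⁿ → ℂ be continuously real-differentiable and assume that at every point z of the torus (ℂ*)ⁿ = {z : z_j ≠ 0 for all j} the real Fréchet derivative of f (as a map ℝ²ⁿ → ℝ²) is surjective. Then at every point w ∈ (ℂ*)ⁿ the real Fréchet derivative of g = f ∘ φ_{a,b} is surjective; i.e., g has no mixed critical point on (ℂ*)ⁿ. -/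

import Mathlib

/-!
At a point `w` of the torus the real derivative of `φ_{a,b}` acts diagonally, its `j`-th entry
being `v ↦ c₁ v + c₂ v̄` with `‖c₂‖ / ‖c₁‖ = b_j / a_j < 1`. Such an `ℝ`-linear map of `ℂ` is
injective, since `‖c₁ v‖ = ‖c₂ v̄‖` forces `v = 0`, hence bijective. As `φ_{a,b}` maps the torus
into itself, the chain rule writes `Dg_w = Df_{φ(w)} ∘ Dφ_w` as a composition of surjections.
-/

open Complex ComplexConjugate

noncomputable def mulAddMulConj (c₁ c₂ : ℂ) : ℂ →L[ℝ] ℂ :=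
  ContinuousLinearMap.mul ℝ ℂ c₁ +
    (ContinuousLinearMap.mul ℝ ℂ c₂).comp conjCLE.toContinuousLinearMap

@[simp]
theorem mulAddMulConj_apply (c₁ c₂ v : ℂ) : mulAddMulConj c₁ c₂ v = c₁ * v + c₂ * conj v := rfl

theorem mulAddMulConj_injective {c₁ c₂ : ℂ} (h : ‖c₂‖ < ‖c₁‖) :
    Function.Injective (mulAddMulConj c₁ c₂) := by
  refine (injective_iff_map_eq_zero _).2 fun v hv => ?_
  have hnorm : ‖c₁‖ * ‖v‖ = ‖c₂‖ * ‖v‖ := by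
    simpa using congrArg norm (eq_neg_of_add_eq_zero_left hv)
  by_contra hv0
  exact h.ne' (mul_right_cancel₀ (norm_ne_zero_iff.2 hv0) hnorm)

theorem mulAddMulConj_surjective {c₁ c₂ : ℂ} (h : ‖c₂‖ < ‖c₁‖) :
    Function.Surjective (mulAddMulConj c₁ c₂) :=
  (LinearMap.injective_iff_surjective (f := (mulAddMulConj c₁ c₂ : ℂ →ₗ[ℝ] ℂ))).1
    (mulAddMulConj_injective h)

def mixedPow (p q : ℕ) (z : ℂ) : ℂ := z ^ p * conj z ^ q

theorem mixedPow_ne_zero (p q : ℕ) {z : ℂ} (hz : z ≠ 0) : mixedPow p q z ≠ 0 :=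
  mul_ne_zero (pow_ne_zero _ hz) (pow_ne_zero _ ((map_ne_zero _).2 hz))

theorem hasFDerivAt_mixedPow (p q : ℕ) (z : ℂ) :
    HasFDerivAt (mixedPow p q)
      (mulAddMulConj (p * z ^ (p - 1) * conj z ^ q) (q * z ^ p * conj z ^ (q - 1))) z := by
  have hpow := ((hasDerivAt_pow p z).hasFDerivAt).restrictScalars ℝ
  have hconj := (((hasDerivAt_pow q (conj z)).hasFDerivAt).restrictScalars ℝ).comp z
    conjCLE.hasFDerivAt
  refine (hpow.mul hconj).congr_fderiv (ContinuousLinearMap.ext fun v => ?_)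
  simp only [conjCLE, Function.comp_apply, add_apply, smul_apply, ContinuousLinearMap.comp_apply,
    ContinuousLinearEquiv.coe_coe, ContinuousAlgEquiv.coeCLE_apply, conjCAE_apply,
    ContinuousLinearMap.coe_restrictScalars', ContinuousLinearMap.toSpanSingleton_apply,
    smul_eq_mul, mulAddMulConj_apply]
  ring

theorem natCast_mul_pow_pred_mul {R : Type*} [Semiring R] (k : ℕ) (r : R) :
    (k : R) * r ^ (k - 1) * r = k * r ^ k := by
  cases k <;> simp [pow_succ, mul_assoc]

theorem mulAddMulConj_mixedPow_surjective {p q : ℕ} (hqp : q < p) {z : ℂ} (hz : z ≠ 0) :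
    Function.Surjective
      (mulAddMulConj (p * z ^ (p - 1) * conj z ^ q) (q * z ^ p * conj z ^ (q - 1))) := by
  apply mulAddMulConj_surjective
  have hr : 0 < ‖z‖ := norm_pos_iff.2 hz
  refine lt_of_mul_lt_mul_left ?_ hr.le
  calc ‖z‖ * ‖(q : ℂ) * z ^ p * conj z ^ (q - 1)‖ = q * ‖z‖ ^ q * ‖z‖ ^ p := by
        simp only [norm_mul, norm_pow, RCLike.norm_conj, Complex.norm_natCast]
        linear_combination ‖z‖ ^ p * natCast_mul_pow_pred_mul q ‖z‖
    _ < p * ‖z‖ ^ q * ‖z‖ ^ p := by gcongr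
    _ = ‖z‖ * ‖(p : ℂ) * z ^ (p - 1) * conj z ^ q‖ := by
        simp only [norm_mul, norm_pow, RCLike.norm_conj, Complex.norm_natCast]
        linear_combination -‖z‖ ^ q * natCast_mul_pow_pred_mul p ‖z‖

theorem hasFDerivAt_piMap {𝕜 ι : Type*} [NontriviallyNormedField 𝕜] [Fintype ι]
    {E F : ι → Type*} [∀ i, NormedAddCommGroup (E i)] [∀ i, NormedSpace 𝕜 (E i)]
    [∀ i, NormedAddCommGroup (F i)] [∀ i, NormedSpace 𝕜 (F i)]
    {g : ∀ i, E i → F i} {L : ∀ i, E i →L[𝕜] F i} {x : ∀ i, E i}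
    (h : ∀ i, HasFDerivAt (g i) (L i) (x i)) :
    HasFDerivAt (Pi.map g) (ContinuousLinearMap.piMap L) x :=
  hasFDerivAt_pi'.2 fun i => (h i).comp x (hasFDerivAt_apply i x)

theorem differentiableAt_of_surjective_fderiv {𝕜 E F : Type*} [NontriviallyNormedField 𝕜]
    [NormedAddCommGroup E] [NormedSpace 𝕜 E] [NormedAddCommGroup F] [NormedSpace 𝕜 F]
    [Nontrivial F] {f : E → F} {x : E} (h : Function.Surjective (fderiv 𝕜 f x)) :
    DifferentiableAt 𝕜 f x := by
  by_contra hf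
  obtain ⟨y, hy⟩ := exists_ne (0 : F)
  obtain ⟨v, hv⟩ := h y
  rw [fderiv_zero_of_not_differentiableAt hf] at hv
  exact hy hv.symm

def mixedCovering {ι : Type*} (a b : ι → ℕ) : (ι → ℂ) → (ι → ℂ) :=
  Pi.map fun j => mixedPow (a j) (b j)

theorem mixedPullback_no_critical_point_on_torus_general (n : ℕ)
    (a b : Fin n → ℕ) (hab : ∀ j, b j < a j)
    (f : (Fin n → ℂ) → ℂ)
    (hreg : ∀ z : Fin n → ℂ, (∀ j, z j ≠ 0) → Function.Surjective (fderiv ℝ f z)) :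
    ∀ w : Fin n → ℂ, (∀ j, w j ≠ 0) →
      Function.Surjective
        (fderiv ℝ (fun w : Fin n → ℂ => f (fun j => w j ^ (a j) * conj (w j) ^ (b j))) w) := by
  intro w hw
  have hφw : ∀ j, mixedCovering a b w j ≠ 0 := fun j => mixedPow_ne_zero _ _ (hw j)
  have hφ : HasFDerivAt (mixedCovering a b) _ w :=
    hasFDerivAt_piMap fun j => hasFDerivAt_mixedPow (a j) (b j) (w j)
  have hf : DifferentiableAt ℝ f (mixedCovering a b w) :=
    differentiableAt_of_surjective_fderiv (hreg _ hφw)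
  change Function.Surjective (fderiv ℝ (f ∘ mixedCovering a b) w)
  rw [(hf.hasFDerivAt.comp w hφ).fderiv]
  exact (hreg _ hφw).comp <|
    Function.Surjective.piMap fun j => mulAddMulConj_mixedPow_surjective (hab j) (hw j)

/-- If `f` is continuously real-differentiable and has no mixed critical point on the
torus `(ℂ*)ⁿ`, then the pull-back `g = f ∘ φ_{a,b}` under the mixed covering
`φ_{a,b}(w) = (w₁^{a₁} conj(w₁)^{b₁}, …, wₙ^{aₙ} conj(wₙ)^{bₙ})` (with `a_j > b_j ≥ 0`)
has no mixed critical point on `(ℂ*)ⁿ` either. -/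
theorem mixedPullback_no_critical_point_on_torus (n : ℕ)
    (a b : Fin n → ℕ) (hab : ∀ j, b j < a j)
    (f : (Fin n → ℂ) → ℂ) (hf : ContDiff ℝ 1 f)
    (hreg : ∀ z : Fin n → ℂ, (∀ j, z j ≠ 0) → Function.Surjective (fderiv ℝ f z)) :
    ∀ w : Fin n → ℂ, (∀ j, w j ≠ 0) →
      Function.Surjective
        (fderiv ℝ (fun w : Fin n → ℂ => f (fun j => w j ^ (a j) * conj (w j) ^ (b j))) w) :=
  mixedPullback_no_critical_point_on_torus_general n a b hab f hreg
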